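/- arXiv:1904.11222 — 2 statements merged into one kernel-verified Lean document; each statement's English description precedes it below -/
import Mathlib

section
/- Let G be the group presented by generators x₁,…,x₅ with relations [x₄,x₁] = 1, [x₅,x₂] = 1, x₄x₃x₂ = x₃x₂x₄ = x₂x₄x₃, and x₅·(x₂⁻¹x₃x₂)·x₁ = (x₂⁻¹x₃x₂)·x₁·x₅ = x₁·x₅·(x₂⁻¹x₃x₂). Then the quotient of G by the normal closure of the five elements x₄x₃x₂, x₅x₂, x₄x₁, x₅(x₂⁻¹x₃x₂)x₁, and (x₂x₁)⁻¹x₃(x₂x₁)x₅x₄ is isomorphic to the infinite dihedral group ⟨a,b | a² = (ba)² = 1⟩. -/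
open scoped commutatorElement

namespace Quadrilateral

/-- Generators x₁,…,x₅ of the free group on 5 letters. -/
def x (i : Fin 5) : FreeGroup (Fin 5) := FreeGroup.of i

/-- The word x₂⁻¹x₃x₂. -/
def w : FreeGroup (Fin 5) := (x 1)⁻¹ * x 2 * x 1

/-- Randell's relations for the complement of the complete quadrilateral:
[x₄,x₁], [x₅,x₂], x₄x₃x₂ = x₃x₂x₄ = x₂x₄x₃ and
x₅(x₂⁻¹x₃x₂)x₁ = (x₂⁻¹x₃x₂)x₁x₅ = x₁x₅(x₂⁻¹x₃x₂). -/
def quadRels : Set (FreeGroup (Fin 5)) :=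
  {⁅x 3, x 0⁆, ⁅x 4, x 1⁆,
   (x 3 * x 2 * x 1) * (x 2 * x 1 * x 3)⁻¹,
   (x 2 * x 1 * x 3) * (x 1 * x 3 * x 2)⁻¹,
   (x 4 * w * x 0) * (w * x 0 * x 4)⁻¹,
   (w * x 0 * x 4) * (x 0 * x 4 * w)⁻¹}

/-- The fundamental group of the complement of the complete quadrilateral. -/
abbrev G := PresentedGroup quadRels

/-- The images in G of the generators. -/
def g (i : Fin 5) : G := PresentedGroup.of i

/-- The image in G of x₂⁻¹x₃x₂. -/
def gw : G := (g 1)⁻¹ * g 2 * g 1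

/-- The five singular meridians γ_{p₁},…,γ_{p₅}. -/
def meridians : Set G :=
  {g 3 * g 2 * g 1, g 4 * g 1, g 3 * g 0, g 4 * gw * g 0,
   (g 1 * g 0)⁻¹ * g 2 * (g 1 * g 0) * g 4 * g 3}

/-- Relations of the infinite dihedral presentation ⟨a, b | a², (ba)²⟩. -/
def dihedralRels : Set (FreeGroup (Fin 2)) :=
  {(FreeGroup.of 0) ^ 2, (FreeGroup.of 1 * FreeGroup.of 0) ^ 2}

/-!
Write `g i` for the image of `x_{i+1}`. Modulo the meridians, `x₃x₂x₁`, `x₅x₂` and `x₄x₁` give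
`x₄ = x₁⁻¹`, `x₅ = x₂⁻¹`, `x₃ = x₁x₂⁻¹`; then the fourth meridian becomes `x₂⁻²x₁² = 1` and the
fifth `x₁⁻¹x₂⁻¹x₁²x₂⁻¹x₁⁻¹ = 1`, so `x₁² = x₂² = 1`. Hence the quotient is generated by two
involutions, like the infinite dihedral group is by `a` and `ba`. Conversely, for any two
involutions `s, t` the assignment `x₁, …, x₅ ↦ s, t, st, s, t` respects Randell's relations and
kills the meridians, so both groups have the universal property of a free product of two copies
of `ℤ/2`, and the two lifts are mutually inverse.
-/

section Involutions

variable {H : Type*} [Group H] {s t : H}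

theorem mul_self_mul_cancel (hs : s * s = 1) (y : H) : s * (s * y) = y := by
  rw [← mul_assoc, hs, one_mul]

def quadLift (hs : s * s = 1) (ht : t * t = 1) : G →* H :=
  PresentedGroup.toGroup (f := ![s, t, s * t, s, t]) <| by
    intro r hr
    simp only [quadRels, Set.mem_insert_iff, Set.mem_singleton_iff] at hr
    rcases hr with rfl | rfl | rfl | rfl | rfl | rfl <;>
      simp [x, w, commutatorElement_def, mul_assoc, inv_eq_of_mul_eq_one_right hs,
        inv_eq_of_mul_eq_one_right ht, hs, ht, mul_self_mul_cancel]

theorem quadLift_g (hs : s * s = 1) (ht : t * t = 1) (i : Fin 5) :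
    quadLift hs ht (g i) = ![s, t, s * t, s, t] i :=
  PresentedGroup.toGroup.of _

theorem quadLift_meridian (hs : s * s = 1) (ht : t * t = 1) :
    ∀ m ∈ meridians, quadLift hs ht m = 1 := by
  intro m hm
  simp only [meridians, Set.mem_insert_iff, Set.mem_singleton_iff] at hm
  rcases hm with rfl | rfl | rfl | rfl | rfl <;>
    simp [gw, quadLift_g, mul_assoc, inv_eq_of_mul_eq_one_right hs,
      inv_eq_of_mul_eq_one_right ht, hs, ht, mul_self_mul_cancel]

def quotLift (hs : s * s = 1) (ht : t * t = 1) : G ⧸ Subgroup.normalClosure meridians →* H :=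
  QuotientGroup.lift _ (quadLift hs ht) <|
    Subgroup.normalClosure_le_normal fun m hm => quadLift_meridian hs ht m hm

theorem quotLift_mk_g (hs : s * s = 1) (ht : t * t = 1) (i : Fin 5) :
    quotLift hs ht (g i : G ⧸ Subgroup.normalClosure meridians) = ![s, t, s * t, s, t] i :=
  quadLift_g hs ht i

def dihedralLift (hs : s * s = 1) (ht : t * t = 1) : PresentedGroup dihedralRels →* H :=
  PresentedGroup.toGroup (f := ![s, t * s]) <| by
    intro r hr
    simp only [dihedralRels, Set.mem_insert_iff, Set.mem_singleton_iff] at hr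
    rcases hr with rfl | rfl <;> simp [sq, mul_assoc, hs, ht, mul_self_mul_cancel]

theorem dihedralLift_of (hs : s * s = 1) (ht : t * t = 1) (i : Fin 2) :
    dihedralLift hs ht (PresentedGroup.of i) = ![s, t * s] i :=
  PresentedGroup.toGroup.of _

end Involutions

local notation "Q" => G ⧸ Subgroup.normalClosure meridians

theorem mk_meridian_eq_one {m : G} (hm : m ∈ meridians) : (m : Q) = 1 :=
  (QuotientGroup.eq_one_iff m).2 (Subgroup.subset_normalClosure hm)

theorem mk_g3 : (g 3 : Q) = (g 0 : Q)⁻¹ :=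
  eq_inv_of_mul_eq_one_left (mk_meridian_eq_one (by simp [meridians]))

theorem mk_g4 : (g 4 : Q) = (g 1 : Q)⁻¹ :=
  eq_inv_of_mul_eq_one_left (mk_meridian_eq_one (by simp [meridians]))

theorem mk_g2 : (g 2 : Q) = g 0 * (g 1 : Q)⁻¹ := by
  have h : ((g 3 * g 2 * g 1 : G) : Q) = 1 := mk_meridian_eq_one (by simp [meridians])
  rw [QuotientGroup.mk_mul, QuotientGroup.mk_mul, mk_g3] at h
  calc (g 2 : Q) = g 0 * ((g 0 : Q)⁻¹ * g 2 * g 1) * (g 1 : Q)⁻¹ := by group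
    _ = g 0 * (g 1 : Q)⁻¹ := by rw [h, mul_one]

theorem mk_g0_mul_self_eq_mk_g1_mul_self : (g 0 : Q) * g 0 = g 1 * g 1 := by
  have h : ((g 4 * gw * g 0 : G) : Q) = 1 := mk_meridian_eq_one (by simp [meridians])
  simp only [gw, QuotientGroup.mk_mul, QuotientGroup.mk_inv, mk_g4, mk_g2] at h
  calc (g 0 : Q) * g 0
        = g 1 * g 1 * ((g 1 : Q)⁻¹ * ((g 1 : Q)⁻¹ * (g 0 * (g 1 : Q)⁻¹) * g 1) * g 0) := by group
    _ = g 1 * g 1 := by rw [h, mul_one]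

theorem mk_g0_mul_self : (g 0 : Q) * g 0 = 1 := by
  have h : (((g 1 * g 0)⁻¹ * g 2 * (g 1 * g 0) * g 4 * g 3 : G) : Q) = 1 :=
    mk_meridian_eq_one (by simp [meridians])
  simp only [QuotientGroup.mk_mul, QuotientGroup.mk_inv, mk_g4, mk_g3, mk_g2] at h
  -- `h` reads `x₁⁻¹ x₂⁻¹ x₁² x₂⁻¹ x₁⁻¹ = 1`, and `x₁² = x₂²` collapses it to `x₁⁻² = 1`.
  have h' : (g 0 : Q)⁻¹ * ((g 1 : Q)⁻¹ * (g 0 * g 0) * (g 1 : Q)⁻¹) * (g 0 : Q)⁻¹ = 1 := by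
    rw [← h]; group
  rw [mk_g0_mul_self_eq_mk_g1_mul_self] at h'
  refine inv_eq_one.mp ?_
  rw [← h']
  group

theorem mk_g1_mul_self : (g 1 : Q) * g 1 = 1 :=
  mk_g0_mul_self_eq_mk_g1_mul_self ▸ mk_g0_mul_self

theorem dihedral_a_mul_self :
    (PresentedGroup.of 0 : PresentedGroup dihedralRels) * PresentedGroup.of 0 = 1 := by
  rw [← sq]
  exact (map_pow _ _ 2).symm.trans (PresentedGroup.one_of_mem (by simp [dihedralRels]))

theorem dihedral_ba_mul_self :
    (PresentedGroup.of 1 * PresentedGroup.of 0 : PresentedGroup dihedralRels) *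
      (PresentedGroup.of 1 * PresentedGroup.of 0) = 1 := by
  rw [← sq]
  exact (map_pow _ _ 2).symm.trans (PresentedGroup.one_of_mem (by simp [dihedralRels]))

def quotToDihedral : Q →* PresentedGroup dihedralRels :=
  quotLift dihedral_a_mul_self dihedral_ba_mul_self

def dihedralToQuot : PresentedGroup dihedralRels →* Q :=
  dihedralLift mk_g0_mul_self mk_g1_mul_self

theorem dihedralToQuot_comp_quotToDihedral :
    dihedralToQuot.comp quotToDihedral = MonoidHom.id Q := by
  refine QuotientGroup.monoidHom_ext _ (PresentedGroup.ext fun i => ?_)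
  change dihedralToQuot (quotToDihedral (g i : Q)) = g i
  fin_cases i <;>
    simp [quotToDihedral, dihedralToQuot, quotLift_mk_g, dihedralLift_of, mk_g2, mk_g3, mk_g4,
      mul_assoc, mk_g0_mul_self, inv_eq_of_mul_eq_one_right mk_g1_mul_self]

theorem quotToDihedral_comp_dihedralToQuot :
    quotToDihedral.comp dihedralToQuot = MonoidHom.id (PresentedGroup dihedralRels) := by
  refine PresentedGroup.ext fun i => ?_
  fin_cases i <;>
    simp [quotToDihedral, dihedralToQuot, quotLift_mk_g, dihedralLift_of, mul_assoc,
      dihedral_a_mul_self]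

/-- The quotient of the fundamental group of the complement of the complete quadrilateral
by the normal closure of the five singular meridians is the infinite dihedral group. -/
theorem lac_surface_pi1_iso_dihedral :
    Nonempty ((G ⧸ Subgroup.normalClosure meridians) ≃* PresentedGroup dihedralRels) :=
  ⟨quotToDihedral.toMulEquiv dihedralToQuot dihedralToQuot_comp_quotToDihedral
    quotToDihedral_comp_dihedralToQuot⟩

end Quadrilateral
end

section
/- The quotient of the free group on x₂, x₃ by the normal closure of the elements x₂⁻²(x₃x₂)², (x₃x₂)²x₂⁻², and x₂⁻¹(x₃x₂)²x₂·((x₃x₂)²)⁻¹ is infinite. -/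
/-- The quotient of the free group on x₂, x₃ by the normal closure of the relators
x₂⁻²(x₃x₂)², (x₃x₂)²x₂⁻², and x₂⁻¹(x₃x₂)²x₂·((x₃x₂)²)⁻¹ is infinite. -/
theorem quotient_by_three_relators_infinite :
    Infinite (FreeGroup (Fin 2) ⧸ Subgroup.normalClosure
      (({ ((FreeGroup.of 0) ^ 2)⁻¹ * (FreeGroup.of 1 * FreeGroup.of 0) ^ 2,
          (FreeGroup.of 1 * FreeGroup.of 0) ^ 2 * ((FreeGroup.of 0) ^ 2)⁻¹,
          (FreeGroup.of 0)⁻¹ * (FreeGroup.of 1 * FreeGroup.of 0) ^ 2 * FreeGroup.of 0 *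
            (((FreeGroup.of 1 * FreeGroup.of 0) ^ 2))⁻¹ } : Set (FreeGroup (Fin 2))))) := by
  set S : Set (FreeGroup (Fin 2)) :=
      ({ ((FreeGroup.of 0) ^ 2)⁻¹ * (FreeGroup.of 1 * FreeGroup.of 0) ^ 2,
          (FreeGroup.of 1 * FreeGroup.of 0) ^ 2 * ((FreeGroup.of 0) ^ 2)⁻¹,
          (FreeGroup.of 0)⁻¹ * (FreeGroup.of 1 * FreeGroup.of 0) ^ 2 * FreeGroup.of 0 *
            (((FreeGroup.of 1 * FreeGroup.of 0) ^ 2))⁻¹ } : Set (FreeGroup (Fin 2))) with hS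
  -- map x₀ ↦ 1, x₁ ↦ 0 into Multiplicative ℤ
  let f : FreeGroup (Fin 2) →* Multiplicative ℤ :=
    FreeGroup.lift (fun i => if i = 0 then Multiplicative.ofAdd 1 else 1)
  have hf0 : f (FreeGroup.of 0) = Multiplicative.ofAdd 1 := by simp [f]
  have hf1 : f (FreeGroup.of 1) = 1 := by simp [f]
  have hker : Subgroup.normalClosure S ≤ f.ker := by
    apply Subgroup.normalClosure_le_normal
    intro x hx
    simp only [hS, Set.mem_insert_iff, Set.mem_singleton_iff] at hx
    rcases hx with h | h | h <;> subst h <;>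
      simp [MonoidHom.mem_ker, hf0, hf1, mul_pow, ← ofAdd_add]
  let g : (FreeGroup (Fin 2) ⧸ Subgroup.normalClosure S) →* Multiplicative ℤ :=
    QuotientGroup.lift _ f hker
  have hsurj : Function.Surjective g := by
    intro n
    refine ⟨QuotientGroup.mk ((FreeGroup.of 0) ^ (Multiplicative.toAdd n)), ?_⟩
    simp [g, hf0, ← ofAdd_zsmul]
  exact Infinite.of_surjective g hsurj
end
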